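/- arXiv:1911.03239 — 5 statements merged into one kernel-verified Lean document; each statement's English description precedes it below -/
import Mathlib

section
/- For all t ≥ 1, y > 1, and y' ∈ [1/2, 1], there exists a universal constant C > 0 such that exp(-(y-y')²/(4t)) - exp(-(y+y')²/(4t)) ≤ C·(y·y'/t)·exp(-y²/(5t)). -/
/-!
Since `(y + y')² = (y - y')² + 4 y y'`, the difference is `e^{-(y-y')²/4t} (1 - e^{-y y'/t})`,
and `1 - e^{-x} ≤ x`. The remaining Gaussian is compared with `e^{-y²/5t}` through
`4 y² - 5 (y - y')² = 20 y'² - (y - 5 y')² ≤ 20 ≤ 20 t`.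
-/

open Real Set

theorem Real.exp_sub_exp_sub_le (a x : ℝ) : exp a - exp (a - x) ≤ x * exp a := by
  have h := add_one_le_exp (-x)
  rw [sub_eq_add_neg a, exp_add]
  nlinarith [exp_pos a]

theorem exp_neg_sq_sub_div_le {t y' : ℝ} (ht : 1 ≤ t) (hy' : y' ^ 2 ≤ 1) (y : ℝ) :
    exp (-(y - y') ^ 2 / (4 * t)) ≤ exp 1 * exp (-y ^ 2 / (5 * t)) := by
  have ht0 : 0 < t := by linarith
  rw [← exp_add, exp_le_exp, div_le_iff₀ (by positivity)]
  have key : 4 * y ^ 2 - 5 * (y - y') ^ 2 ≤ 20 * t := by nlinarith [sq_nonneg (y - 5 * y')]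
  have hsplit : (1 + -y ^ 2 / (5 * t)) * (4 * t) = (20 * t - 4 * y ^ 2) / 5 := by
    field_simp; ring
  rw [hsplit]
  linarith

theorem stmt0 :
    ∃ C : ℝ, 0 < C ∧ ∀ t : ℝ, 1 ≤ t → ∀ y : ℝ, 1 < y → ∀ y' ∈ Icc (1/2 : ℝ) 1,
      exp (-(y - y')^2 / (4*t)) - exp (-(y + y')^2 / (4*t))
        ≤ C * (y * y' / t) * exp (-y^2 / (5*t)) := by
  refine ⟨exp 1, exp_pos 1, fun t ht y hy y' ⟨hy'₀, hy'₁⟩ => ?_⟩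
  have ht0 : 0 < t := by linarith
  have hsplit : -(y + y') ^ 2 / (4 * t) = -(y - y') ^ 2 / (4 * t) - y * y' / t := by
    field_simp; ring
  have hy'sq : y' ^ 2 ≤ 1 := by nlinarith
  calc exp (-(y - y') ^ 2 / (4 * t)) - exp (-(y + y') ^ 2 / (4 * t))
      ≤ y * y' / t * exp (-(y - y') ^ 2 / (4 * t)) := hsplit ▸ exp_sub_exp_sub_le _ _
    _ ≤ y * y' / t * (exp 1 * exp (-y ^ 2 / (5 * t))) := by
      have : 0 ≤ y * y' / t := by positivity
      gcongr
      exact exp_neg_sq_sub_div_le ht hy'sq y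
    _ = exp 1 * (y * y' / t) * exp (-y ^ 2 / (5 * t)) := by ring
end

section
/- Let v(t,y) = ε·e^t·∫_{1/2}^{1} (exp(-(y-y')²/(4t)) - exp(-(y+y')²/(4t)))/√(4πt) dy' for t ≥ 1, y > 1, ε > 0. Then there is a universal constant C > 0 such that v(t,y) ≤ C·ε·(e^t/t)·(y/√t)·exp(-y²/(5t)) for all t ≥ 2 and y > 1. -/
open Real Set intervalIntegral

/-!
Writing `(y + y')² = (y - y')² + 4yy'`, the Dirichlet kernel is the Gaussian `G(y - y')` times
`1 - exp (-yy'/t) ≤ yy'/t`, which produces the factor `y/t`. For `y' ≤ 1 ≤ y` the Gaussian is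
dominated by `exp (1/t - y²/(5t))`, since `4y² - 5(y - y')² ≤ 4y² - 5(y - 1)² ≤ 20`. Integrating
over an interval of length `1/2` and using `√(4πt) = 2√π √t` gives the bound.
-/

noncomputable def dirichletHeatKernel (t y y' : ℝ) : ℝ :=
  (exp (-(y - y') ^ 2 / (4 * t)) - exp (-(y + y') ^ 2 / (4 * t))) / √(4 * π * t)

lemma exp_sub_exp_sub_le_mul (a b : ℝ) : exp a - exp (a - b) ≤ exp a * b := by
  have h := add_one_le_exp (-b)
  rw [sub_eq_add_neg a b, exp_add]
  nlinarith [exp_pos a]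

lemma exp_neg_sq_sub_le {t y y' : ℝ} (ht : 0 < t) (hy' : y' ≤ 1) (hy : 1 ≤ y) :
    exp (-(y - y') ^ 2 / (4 * t)) ≤ exp (1 / t) * exp (-y ^ 2 / (5 * t)) := by
  rw [← exp_add, exp_le_exp]
  have hsq : (y - 1) ^ 2 ≤ (y - y') ^ 2 := by nlinarith
  have key : 4 * y ^ 2 - 5 * (y - y') ^ 2 ≤ 20 := by nlinarith [sq_nonneg (y - 5)]
  have h : 1 / t + -y ^ 2 / (5 * t) - -(y - y') ^ 2 / (4 * t)
      = (20 - (4 * y ^ 2 - 5 * (y - y') ^ 2)) / (20 * t) := by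
    field_simp
    ring
  have : 0 ≤ (20 - (4 * y ^ 2 - 5 * (y - y') ^ 2)) / (20 * t) :=
    div_nonneg (by linarith) (by positivity)
  linarith

lemma dirichletHeatKernel_le {t y y' : ℝ} (ht : 0 < t) (hy' : y' ≤ 1) (hy : 1 ≤ y) :
    dirichletHeatKernel t y y'
      ≤ exp (1 / t) * exp (-y ^ 2 / (5 * t)) * (y / t) / √(4 * π * t) := by
  have hsplit : -(y + y') ^ 2 / (4 * t) = -(y - y') ^ 2 / (4 * t) - y * y' / t := by
    field_simp
    ring
  have hyy' : y * y' / t ≤ y / t := by gcongr; nlinarith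
  unfold dirichletHeatKernel
  gcongr ?_ / _
  calc exp (-(y - y') ^ 2 / (4 * t)) - exp (-(y + y') ^ 2 / (4 * t))
      ≤ exp (-(y - y') ^ 2 / (4 * t)) * (y * y' / t) := by
        rw [hsplit]
        exact exp_sub_exp_sub_le_mul _ _
    _ ≤ exp (-(y - y') ^ 2 / (4 * t)) * (y / t) := by gcongr
    _ ≤ exp (1 / t) * exp (-y ^ 2 / (5 * t)) * (y / t) := by
        gcongr
        exact exp_neg_sq_sub_le ht hy' hy

lemma integral_dirichletHeatKernel_le {t y : ℝ} (ht : 2 ≤ t) (hy : 1 ≤ y) :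
    ∫ y' in (1 / 2 : ℝ)..1, dirichletHeatKernel t y y'
      ≤ exp (1 / 2) / (4 * √π) * (1 / t) * (y / √t) * exp (-y ^ 2 / (5 * t)) := by
  have ht0 : 0 < t := by linarith
  have hcont : Continuous (dirichletHeatKernel t y) := by
    unfold dirichletHeatKernel
    fun_prop
  have hmono := integral_mono_on (μ := MeasureTheory.volume) (by norm_num : (1 / 2 : ℝ) ≤ 1)
    (hcont.intervalIntegrable _ _) intervalIntegrable_const
    fun y' hy' => dirichletHeatKernel_le ht0 hy'.2 hy
  have hexp : exp (1 / t) ≤ exp (1 / 2) := exp_le_exp.2 (one_div_le_one_div_of_le two_pos ht)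
  have hsqrt : √(4 * π * t) = 2 * √π * √t := by
    rw [sqrt_mul (by positivity), sqrt_mul (by norm_num), show (4 : ℝ) = 2 ^ 2 by norm_num,
      sqrt_sq (by norm_num)]
  rw [integral_const, smul_eq_mul, hsqrt] at hmono
  have hst : 0 < √t := sqrt_pos.2 ht0
  calc _ ≤ _ := hmono
    _ = exp (1 / t) / (4 * √π) * (1 / t) * (y / √t) * exp (-y ^ 2 / (5 * t)) := by
        field_simp
        ring
    _ ≤ _ := by gcongr

theorem stmt2 :
    ∃ C : ℝ, 0 < C ∧ ∀ ε : ℝ, 0 < ε → ∀ t : ℝ, 2 ≤ t → ∀ y : ℝ, 1 < y →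
      ε * exp t * ∫ y' in (1/2 : ℝ)..1,
          (exp (-(y - y')^2 / (4*t)) - exp (-(y + y')^2 / (4*t))) / Real.sqrt (4*π*t)
        ≤ C * ε * (exp t / t) * (y / Real.sqrt t) * exp (-y^2 / (5*t)) := by
  refine ⟨exp (1 / 2) / (4 * √π), by positivity, fun ε hε t ht y hy => ?_⟩
  calc ε * exp t * ∫ y' in (1 / 2 : ℝ)..1, dirichletHeatKernel t y y'
      ≤ ε * exp t * (exp (1 / 2) / (4 * √π) * (1 / t) * (y / √t) * exp (-y ^ 2 / (5 * t))) :=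
        mul_le_mul_of_nonneg_left (integral_dirichletHeatKernel_le ht hy.le) (by positivity)
    _ = _ := by ring
end

section
/- Suppose T_ε is a function of ε ∈ (0, ε₀) such that there exist constants C₁, C₂ > 0 with C₁/ε ≤ e^{T_ε}/T_ε^{3/2} and, for every δ > 0, e^{T_ε}/T_ε^{3/2+δ} ≤ Q_δ/ε for some Q_δ > 0. Then T_ε = ln(1/ε) + (3/2)·ln ln(1/ε) + o(ln ln(1/ε)) as ε → 0⁺. -/
/-! Taking logarithms, with `L = log (1/ε)` and `t = T ε`, the hypotheses read
`log C₁ + L ≤ t - (3/2) log t` and `t - (3/2 + δ) log t ≤ log Q_δ + L`. Combining the two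
bounds for `δ = 1` gives `t ≥ L - O(1)`, and then `log t = o(t)` gives `t ≤ 3L`, so
`log t = log L + O(1)`. Substituting this back, `t - L - (3/2) log L` lies between `-O(1)` and
`δ log L + O_δ(1)` for every `δ > 0`. -/

open Real Set Filter Asymptotics Topology

lemma rpow_three_halves_eq_zero_of_nonpos {x : ℝ} (hx : x ≤ 0) : x ^ ((3:ℝ)/2) = 0 := by
  rcases hx.lt_or_eq with hneg | rfl
  · have hcos : cos ((3:ℝ)/2 * π) = 0 := cos_eq_zero_iff.2 ⟨1, by push_cast; ring⟩
    rw [rpow_def_of_neg hneg, hcos, mul_zero]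
  · exact zero_rpow (by norm_num)

lemma log_exp_div_rpow {t : ℝ} (ht : 0 < t) (p : ℝ) : log (exp t / t ^ p) = t - p * log t := by
  rw [log_div (exp_ne_zero t) (rpow_pos_of_pos ht p).ne', log_exp, log_rpow ht]

lemma log_div_eq_log_add_log_one_div {a ε : ℝ} (ha : 0 < a) (hε : 0 < ε) :
    log (a / ε) = log a + log (1 / ε) := by
  rw [log_div ha.ne' hε.ne', one_div, log_inv, sub_eq_add_neg]

lemma div_le_exp_div_rpow_iff {a ε t p : ℝ} (ha : 0 < a) (hε : 0 < ε) (ht : 0 < t) :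
    a / ε ≤ exp t / t ^ p ↔ log a + log (1 / ε) ≤ t - p * log t := by
  rw [← log_le_log_iff (by positivity) (by positivity), log_exp_div_rpow ht,
    log_div_eq_log_add_log_one_div ha hε]

lemma exp_div_rpow_le_div_iff {a ε t p : ℝ} (ha : 0 < a) (hε : 0 < ε) (ht : 0 < t) :
    exp t / t ^ p ≤ a / ε ↔ t - p * log t ≤ log a + log (1 / ε) := by
  rw [← log_le_log_iff (by positivity) (by positivity), log_exp_div_rpow ht,
    log_div_eq_log_add_log_one_div ha hε]

lemma Asymptotics.isLittleO_of_forall_abs_le_mul_add {α : Type*} {l : Filter α} {f g : α → ℝ}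
    (hg : Tendsto g l atTop) (h : ∀ δ > 0, ∃ K, ∀ᶠ x in l, |f x| ≤ δ * g x + K) :
    f =o[l] g := by
  refine isLittleO_iff.2 fun c hc => ?_
  obtain ⟨K, hK⟩ := h (c / 2) (half_pos hc)
  filter_upwards [hK, hg.eventually_ge_atTop (2 * K / c), hg.eventually_ge_atTop 0]
    with x hfx hKg hg0
  have hK_le : K ≤ c / 2 * g x := by
    rw [div_le_iff₀ hc] at hKg
    linarith
  rw [norm_eq_abs, norm_eq_abs, abs_of_nonneg hg0]
  linarith

-- `(p + 1) • hlow + p • hup` eliminates `log t`.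
lemma le_of_sub_mul_log_bounds {p c q L t : ℝ} (hp : 0 ≤ p) (hlow : c + L ≤ t - p * log t)
    (hup : t - (p + 1) * log t ≤ q + L) : L + (p + 1) * c - p * q ≤ t := by
  linarith [mul_le_mul_of_nonneg_left hlow (by linarith : 0 ≤ p + 1),
    mul_le_mul_of_nonneg_left hup hp]

section SubMulLogBounds

variable {α : Type*} {l : Filter α} {L t : α → ℝ} {p c q : ℝ}

lemma eventually_abs_log_sub_log_le (hL : Tendsto L l atTop) (hp : 0 ≤ p)
    (hlow : ∀ᶠ x in l, c + L x ≤ t x - p * log (t x))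
    (hup : ∀ᶠ x in l, t x - (p + 1) * log (t x) ≤ q + L x) :
    ∀ᶠ x in l, |log (t x) - log (L x)| ≤ log 3 := by
  set K := (p + 1) * c - p * q
  have ht_ge : ∀ᶠ x in l, L x + K ≤ t x := by
    filter_upwards [hlow, hup] with x h₁ h₂
    linarith [le_of_sub_mul_log_bounds hp h₁ h₂]
  have ht : Tendsto t l atTop :=
    tendsto_atTop_mono' l ht_ge (tendsto_atTop_add_const_right l K hL)
  have hlog_small : ∀ᶠ x in l, (p + 1) * log (t x) ≤ t x / 2 := by
    have hc : (0:ℝ) < 1 / (2 * (p + 1)) := by positivity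
    filter_upwards [ht.eventually (isLittleO_log_id_atTop.bound hc), ht.eventually_ge_atTop 1]
      with x hx ht1
    rw [id_eq, norm_of_nonneg (log_nonneg ht1), norm_of_nonneg (by linarith)] at hx
    calc (p + 1) * log (t x) ≤ (p + 1) * (1 / (2 * (p + 1)) * t x) := by gcongr
      _ = t x / 2 := by field_simp
  filter_upwards [ht_ge, hup, hlog_small, hL.eventually_ge_atTop (2 * |K|),
    hL.eventually_ge_atTop (2 * |q|), hL.eventually_gt_atTop 0]
    with x h_ge h_up h_small hK hq' hL0
  have h_lower : L x / 2 ≤ t x := by linarith [neg_abs_le K]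
  have h_upper : t x ≤ 3 * L x := by linarith [le_abs_self q]
  have hlog_lower : log (L x) - log 2 ≤ log (t x) := by
    rw [← log_div hL0.ne' two_ne_zero]
    exact log_le_log (by positivity) h_lower
  have hlog_upper : log (t x) ≤ log 3 + log (L x) := by
    rw [← log_mul three_ne_zero hL0.ne']
    exact log_le_log (by linarith) h_upper
  have h23 : log 2 ≤ log 3 := log_le_log two_pos (by norm_num)
  rw [abs_le]
  constructor <;> linarith

lemma isLittleO_sub_sub_mul_log (hL : Tendsto L l atTop) (hp : 0 ≤ p)
    (hlow : ∀ᶠ x in l, c + L x ≤ t x - p * log (t x))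
    (hup : ∀ δ > 0, ∃ q, ∀ᶠ x in l, t x - (p + δ) * log (t x) ≤ q + L x) :
    (fun x => t x - L x - p * log (L x)) =o[l] fun x => log (L x) := by
  obtain ⟨q₁, hq₁⟩ := hup 1 one_pos
  have hlog_close := eventually_abs_log_sub_log_le hL hp hlow hq₁
  refine isLittleO_of_forall_abs_le_mul_add (tendsto_log_atTop.comp hL) fun δ hδ => ?_
  obtain ⟨q, hq⟩ := hup δ hδ
  refine ⟨|c| + |q| + (p + δ) * log 3, ?_⟩
  filter_upwards [hlow, hq, hlog_close,
    (tendsto_log_atTop.comp hL).eventually_ge_atTop 0] with x h₁ h₂ h₃ (hlogL : 0 ≤ log (L x))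
  rw [abs_le] at h₃ ⊢
  have hlog3 : 0 < log 3 := log_pos (by norm_num)
  constructor
  · linarith [neg_abs_le c, abs_nonneg q, mul_le_mul_of_nonneg_left h₃.1 hp,
      mul_nonneg hδ.le hlogL, mul_nonneg hδ.le hlog3.le]
  · linarith [le_abs_self q, abs_nonneg c, mul_le_mul_of_nonneg_left h₃.2 hp,
      mul_le_mul_of_nonneg_left h₃.2 hδ.le]

end SubMulLogBounds

theorem stmt10 (T : ℝ → ℝ) (ε₀ : ℝ) (hε₀ : 0 < ε₀) (C₁ : ℝ) (hC₁ : 0 < C₁)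
    (hlow : ∀ ε ∈ Ioo (0:ℝ) ε₀, C₁ / ε ≤ exp (T ε) / (T ε) ^ ((3:ℝ)/2))
    (hup : ∀ δ : ℝ, 0 < δ → ∃ Q : ℝ, 0 < Q ∧
      ∀ ε ∈ Ioo (0:ℝ) ε₀, exp (T ε) / (T ε) ^ ((3:ℝ)/2 + δ) ≤ Q / ε) :
    (fun ε : ℝ => T ε - (Real.log (1/ε) + (3/2) * Real.log (Real.log (1/ε))))
      =o[nhdsWithin 0 (Ioi 0)] (fun ε : ℝ => Real.log (Real.log (1/ε))) := by
  have hT_pos : ∀ ε ∈ Ioo (0:ℝ) ε₀, 0 < T ε := fun ε hε => by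
    by_contra! hT
    have := hlow ε hε
    rw [rpow_three_halves_eq_zero_of_nonpos hT, div_zero] at this
    exact (div_pos hC₁ hε.1).not_ge this
  have hL : Tendsto (fun ε : ℝ => log (1 / ε)) (𝓝[>] 0) atTop := by
    simpa only [one_div, Function.comp_def] using tendsto_log_atTop.comp tendsto_inv_nhdsGT_zero
  have hIoo : ∀ᶠ ε in 𝓝[>] (0:ℝ), ε ∈ Ioo 0 ε₀ := Ioo_mem_nhdsGT hε₀
  have hlow_log : ∀ᶠ ε in 𝓝[>] (0:ℝ), log C₁ + log (1 / ε) ≤ T ε - 3 / 2 * log (T ε) := by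
    filter_upwards [hIoo] with ε hε
    exact (div_le_exp_div_rpow_iff hC₁ hε.1 (hT_pos ε hε)).1 (hlow ε hε)
  have hup_log : ∀ δ > 0, ∃ q, ∀ᶠ ε in 𝓝[>] (0:ℝ),
      T ε - (3 / 2 + δ) * log (T ε) ≤ q + log (1 / ε) := fun δ hδ => by
    obtain ⟨Q, hQ, hQ_bound⟩ := hup δ hδ
    refine ⟨log Q, ?_⟩
    filter_upwards [hIoo] with ε hε
    exact (exp_div_rpow_le_div_iff hQ hε.1 (hT_pos ε hε)).1 (hQ_bound ε hε)
  refine (isLittleO_sub_sub_mul_log hL (by norm_num) hlow_log hup_log).congr_left fun ε => ?_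
  ring
end

section
/- Let κ ∈ (0,1), and for 1 ≤ s ≤ κt define E(t-s,s,y') = |1+y'|³·exp(-(1+y')²/(4(t-s)))·exp(-y'²/(3s)) / ((1+(t-s))·(t-s)^{1/2}·s·(1+s²)). Then there is a constant C (depending only on κ) such that ∫_1^{κt} ∫_0^∞ e^{t+s}·E(t-s,s,y') dy' ds ≤ C·t·e^{(1+κ)t}/t^{3/2} for all t ≥ 2. -/
/-!
For `1 ≤ s ≤ κ t` the heat factor `exp (-(1 + y')² / (4 (t - s)))` is at most `1`,
`e^{t+s} ≤ e^{(1+κ) t}` and `t - s ≥ (1 - κ) t`. The substitution `y' = z √s` bounds the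
remaining `y'`-integral by `s² ∫₀^∞ (1 + z)³ e^{-z²/3} dz`, and `s² ≤ s (1 + s²)`,
so the inner integral is at most a constant times `e^{(1+κ) t} / ((1 - κ) t)^{3/2}`,
uniformly in `s`. The `s`-interval has length at most `t`.
-/

open Real Set MeasureTheory intervalIntegral

lemma integrableOn_one_add_pow_mul_exp_neg_sq_div {a : ℝ} (ha : 0 < a) (n : ℕ) :
    IntegrableOn (fun x : ℝ => (1 + x) ^ n * exp (-x ^ 2 / a)) (Ioi 0) := by
  have hexp : ∀ x : ℝ, exp (-x ^ 2 / a) = exp (-a⁻¹ * x ^ 2) := fun x => by ring_nf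
  have hdom : IntegrableOn
      (fun x : ℝ => 2 ^ (n - 1) * (x ^ (0 : ℝ) * exp (-a⁻¹ * x ^ 2)
        + x ^ (n : ℝ) * exp (-a⁻¹ * x ^ 2))) (Ioi 0) :=
    ((integrableOn_rpow_mul_exp_neg_mul_sq (inv_pos.2 ha) (by norm_num)).add
      (integrableOn_rpow_mul_exp_neg_mul_sq (inv_pos.2 ha)
        (by linarith [n.cast_nonneg (α := ℝ)]))).const_mul _
  refine hdom.mono' (by fun_prop)
    ((ae_restrict_iff' measurableSet_Ioi).2 (.of_forall fun x hx => ?_))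
  have hx : 0 ≤ x := le_of_lt hx
  rw [norm_of_nonneg (by positivity), hexp, rpow_zero, rpow_natCast, one_mul, ← one_add_mul,
    ← mul_assoc]
  gcongr
  simpa using add_pow_le zero_le_one hx n

lemma integral_one_add_pow_mul_exp_neg_sq_div_le {a s : ℝ} (ha : 0 < a) (hs : 1 ≤ s) (n : ℕ) :
    ∫ y in Ioi 0, (1 + y) ^ n * exp (-y ^ 2 / (a * s))
      ≤ √s ^ (n + 1) * ∫ z in Ioi 0, (1 + z) ^ n * exp (-z ^ 2 / a) := by
  have hr : 1 ≤ √s := one_le_sqrt.2 hs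
  have hr0 : 0 < √s := by linarith
  have hscale := integral_comp_mul_left_Ioi (fun y => (1 + y) ^ n * exp (-y ^ 2 / (a * s))) 0 hr0
  rw [mul_zero, smul_eq_mul] at hscale
  have hsubst : ∀ z, (1 + √s * z) ^ n * exp (-(√s * z) ^ 2 / (a * s))
      = (1 + √s * z) ^ n * exp (-z ^ 2 / a) := fun z => by
    rw [mul_pow, sq_sqrt (by linarith)]; field_simp
  simp only [hsubst] at hscale
  have hbound : ∫ z in Ioi 0, (1 + √s * z) ^ n * exp (-z ^ 2 / a)
      ≤ √s ^ n * ∫ z in Ioi 0, (1 + z) ^ n * exp (-z ^ 2 / a) := by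
    rw [← MeasureTheory.integral_const_mul]
    refine integral_mono_of_nonneg ?_
      ((integrableOn_one_add_pow_mul_exp_neg_sq_div ha n).const_mul _) ?_
    · exact (ae_restrict_iff' measurableSet_Ioi).2 (.of_forall fun z hz => by
        have : 0 ≤ z := le_of_lt hz; positivity)
    · refine (ae_restrict_iff' measurableSet_Ioi).2 (.of_forall fun z hz => ?_)
      have hz : 0 ≤ z := le_of_lt hz
      simp only [← mul_assoc, ← mul_pow]
      gcongr
      nlinarith
  calc ∫ y in Ioi 0, (1 + y) ^ n * exp (-y ^ 2 / (a * s))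
      = √s * ∫ z in Ioi 0, (1 + √s * z) ^ n * exp (-z ^ 2 / a) := by
        rw [hscale, mul_inv_cancel_left₀ hr0.ne']
    _ ≤ √s * (√s ^ n * ∫ z in Ioi 0, (1 + z) ^ n * exp (-z ^ 2 / a)) := by gcongr
    _ = _ := by ring

lemma intervalIntegral_le_abs_sub_mul {f : ℝ → ℝ} {a b M : ℝ} (hM : 0 ≤ M)
    (hf₀ : ∀ x ∈ Icc b a, 0 ≤ f x) (hf : ∀ x ∈ Icc a b, f x ≤ M) :
    ∫ x in a..b, f x ≤ |b - a| * M := by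
  rcases le_total a b with hab | hba
  · by_cases hfi : IntervalIntegrable f volume a b
    · calc ∫ x in a..b, f x ≤ ∫ _ in a..b, M :=
            integral_mono_on hab hfi intervalIntegrable_const hf
        _ = |b - a| * M := by
          rw [intervalIntegral.integral_const, smul_eq_mul, abs_of_nonneg (by linarith)]
    · rw [integral_undef hfi]; positivity
  · rw [integral_symm]
    exact (neg_nonpos.2 (integral_nonneg hba hf₀)).trans (by positivity)

/-- The paper's `E(t - s, s, y')` is `duhamelRemainder (t - s) s y'`. -/
noncomputable def duhamelRemainder (τ s y : ℝ) : ℝ :=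
  |1 + y| ^ 3 * exp (-(1 + y) ^ 2 / (4 * τ)) * exp (-y ^ 2 / (3 * s))
    / ((1 + τ) * τ ^ ((1:ℝ)/2) * s * (1 + s ^ 2))

lemma duhamelRemainder_nonneg {τ s : ℝ} (hτ : 0 ≤ τ) (hs : 0 ≤ s) (y : ℝ) :
    0 ≤ duhamelRemainder τ s y := by
  unfold duhamelRemainder; positivity

lemma duhamelRemainder_le {τ s y : ℝ} (hτ : 0 < τ) (hs : 0 < s) (hy : 0 ≤ y) :
    duhamelRemainder τ s y
      ≤ (1 + y) ^ 3 * exp (-y ^ 2 / (3 * s)) / (τ ^ ((3:ℝ)/2) * (s * (1 + s ^ 2))) := by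
  have hτ32 : τ ^ ((3:ℝ)/2) ≤ (1 + τ) * τ ^ ((1:ℝ)/2) := by
    rw [show (3:ℝ)/2 = 1 + 1/2 by norm_num, rpow_add hτ, rpow_one]
    gcongr; linarith
  have hheat : exp (-(1 + y) ^ 2 / (4 * τ)) ≤ 1 :=
    exp_le_one_iff.2 (div_nonpos_of_nonpos_of_nonneg (by nlinarith) (by positivity))
  unfold duhamelRemainder
  rw [abs_of_nonneg (by linarith)]
  apply div_le_div₀ (by positivity) _ (by positivity)
  · calc τ ^ ((3:ℝ)/2) * (s * (1 + s ^ 2))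
        ≤ (1 + τ) * τ ^ ((1:ℝ)/2) * (s * (1 + s ^ 2)) := by gcongr
      _ = (1 + τ) * τ ^ ((1:ℝ)/2) * s * (1 + s ^ 2) := by ring
  · calc (1 + y) ^ 3 * exp (-(1 + y) ^ 2 / (4 * τ)) * exp (-y ^ 2 / (3 * s))
        ≤ (1 + y) ^ 3 * 1 * exp (-y ^ 2 / (3 * s)) := by gcongr
      _ = (1 + y) ^ 3 * exp (-y ^ 2 / (3 * s)) := by ring

noncomputable def cubicGaussianMoment : ℝ := ∫ z in Ioi 0, (1 + z) ^ 3 * exp (-z ^ 2 / 3)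

lemma cubicGaussianMoment_pos : 0 < cubicGaussianMoment := by
  refine (setIntegral_pos_iff_support_of_nonneg_ae ?_
    (integrableOn_one_add_pow_mul_exp_neg_sq_div (by norm_num) 3)).2 ?_
  · exact (ae_restrict_iff' measurableSet_Ioi).2 (.of_forall fun z hz => by
      have : 0 ≤ z := le_of_lt hz; positivity)
  · have hsupp :
        Function.support (fun z : ℝ => (1 + z) ^ 3 * exp (-z ^ 2 / 3)) ∩ Ioi 0 = Ioi 0 :=
      inter_eq_right.2 fun z hz => by
        have : 0 < z := hz; simp only [Function.mem_support]; positivity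
    rw [hsupp, Real.volume_Ioi]
    exact ENNReal.zero_lt_top

lemma integral_duhamelRemainder_le {τ s : ℝ} (hτ : 0 < τ) (hs : 1 ≤ s) :
    ∫ y in Ioi 0, duhamelRemainder τ s y ≤ cubicGaussianMoment / τ ^ ((3:ℝ)/2) := by
  have hs0 : 0 < s := by linarith
  have hmoment := integral_one_add_pow_mul_exp_neg_sq_div_le (a := 3) (by norm_num) hs 3
  rw [show √s ^ (3 + 1) = (√s ^ 2) ^ 2 by ring, sq_sqrt hs0.le] at hmoment
  calc ∫ y in Ioi 0, duhamelRemainder τ s y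
      ≤ ∫ y in Ioi 0,
          (1 + y) ^ 3 * exp (-y ^ 2 / (3 * s)) / (τ ^ ((3:ℝ)/2) * (s * (1 + s ^ 2))) := by
        refine integral_mono_of_nonneg ?_
          ((integrableOn_one_add_pow_mul_exp_neg_sq_div (by positivity) 3).div_const _) ?_
        · exact .of_forall fun y => duhamelRemainder_nonneg hτ.le hs0.le y
        · exact (ae_restrict_iff' measurableSet_Ioi).2
            (.of_forall fun y hy => duhamelRemainder_le hτ hs0 (le_of_lt hy))
    _ ≤ s ^ 2 * cubicGaussianMoment / (τ ^ ((3:ℝ)/2) * (s * (1 + s ^ 2))) := by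
        rw [MeasureTheory.integral_div]; gcongr; exact hmoment
    _ ≤ cubicGaussianMoment / τ ^ ((3:ℝ)/2) := by
        rw [div_le_div_iff₀ (by positivity) (by positivity)]
        have := cubicGaussianMoment_pos
        have : s ^ 2 ≤ s * (1 + s ^ 2) := by nlinarith
        calc s ^ 2 * cubicGaussianMoment * τ ^ ((3:ℝ)/2)
            ≤ s * (1 + s ^ 2) * cubicGaussianMoment * τ ^ ((3:ℝ)/2) := by gcongr
          _ = _ := by ring

lemma integral_exp_mul_duhamelRemainder_le {κ t s : ℝ} (hκ : κ < 1) (ht : 0 < t)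
    (hs : s ∈ Icc 1 (κ * t)) :
    ∫ y in Ioi 0, exp (t + s) * duhamelRemainder (t - s) s y
      ≤ exp ((1 + κ) * t) * cubicGaussianMoment / ((1 - κ) * t) ^ ((3:ℝ)/2) := by
  obtain ⟨hs1, hsκ⟩ := hs
  have hgap : (1 - κ) * t ≤ t - s := by linarith
  have hgap0 : 0 < (1 - κ) * t := mul_pos (by linarith) ht
  have := cubicGaussianMoment_pos
  rw [MeasureTheory.integral_const_mul, mul_div_assoc]
  gcongr
  · exact integral_nonneg fun y => duhamelRemainder_nonneg (by linarith) (by linarith) y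
  · linarith
  · exact (integral_duhamelRemainder_le (by linarith) hs1).trans (by gcongr)

theorem stmt14 (κ : ℝ) (hκ : κ ∈ Ioo (0:ℝ) 1) :
    ∃ C : ℝ, 0 < C ∧ ∀ t : ℝ, 2 ≤ t →
      (∫ s in (1:ℝ)..(κ*t), ∫ y' in Ioi (0:ℝ),
          exp (t + s) * (|1 + y'|^3 * exp (-(1 + y')^2 / (4*(t - s)))
            * exp (-y'^2 / (3*s))
            / ((1 + (t - s)) * (t - s) ^ ((1:ℝ)/2) * s * (1 + s^2))))
        ≤ C * t * exp ((1 + κ) * t) / t ^ ((3:ℝ)/2) := by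
  obtain ⟨hκ0, hκ1⟩ := hκ
  have hK := cubicGaussianMoment_pos
  have hκ' : 0 < 1 - κ := by linarith
  refine ⟨cubicGaussianMoment / (1 - κ) ^ ((3:ℝ)/2), by positivity, fun t ht => ?_⟩
  have ht0 : 0 < t := by linarith
  change ∫ s in (1:ℝ)..(κ*t), ∫ y in Ioi 0, exp (t + s) * duhamelRemainder (t - s) s y ≤ _
  set M := exp ((1 + κ) * t) * cubicGaussianMoment / ((1 - κ) * t) ^ ((3:ℝ)/2) with hM
  calc _ ≤ |κ * t - 1| * M :=
        intervalIntegral_le_abs_sub_mul (by positivity)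
          (fun s hs => integral_nonneg fun y => mul_nonneg (exp_nonneg _)
            (duhamelRemainder_nonneg (by linarith [hs.2]) (by nlinarith [hs.1]) y))
          (fun s hs => integral_exp_mul_duhamelRemainder_le hκ1 ht0 hs)
    _ ≤ t * M := by
        gcongr
        rw [abs_le]; constructor <;> nlinarith
    _ = _ := by rw [hM, mul_rpow hκ'.le ht0.le]; ring
end

section
/- For t ≥ 2 and κ ∈ (0,1), ∫_{κt}^{t} ∫_0^∞ e^{t+s} · |1+y'|³·exp(-(1+y')²/(4(t-s)))·exp(-y'²/(3s)) / ((1+(t-s))·(t-s)^{1/2}·s·(1+s²)) dy' ds ≤ C·e^{2t}/t^{3/2}, with C depending only on κ. -/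
open Real Set MeasureTheory intervalIntegral Filter

/-!
For `κ t ≤ s < t` drop the factor `exp (-y'^2/(3s))`, bound `exp (t + s) ≤ exp (2t)` and
`s (1 + s^2) ≥ (κ t)^3`. What remains in `y'` is `(1+y')^3 exp (-(1+y')^2/(4τ))` with
`τ = t - s`, whose integral over `(0, ∞)` is `(2τ + 8τ^2) exp (-1/(4τ)) ≤ 8τ(1 + τ)`
(substituting `u = (1+y')^2/(4τ)` gives the primitive). Hence the inner integral is at most
`8 exp (2t) √τ / (κ t)^3 ≤ 8 exp (2t) √t / (κ t)^3`, and integrating over an interval of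
length `≤ t` gives `(8/κ^3) exp (2t) / t^{3/2}`.
-/

lemma hasDerivAt_cube_gaussian_primitive {τ : ℝ} (hτ : τ ≠ 0) (y : ℝ) :
    HasDerivAt
      (fun y => -8 * τ ^ 2 * ((1 + y) ^ 2 / (4 * τ) + 1) * exp (-((1 + y) ^ 2 / (4 * τ))))
      ((1 + y) ^ 3 * exp (-(1 + y) ^ 2 / (4 * τ))) y := by
  have hu : HasDerivAt (fun y : ℝ => (1 + y) ^ 2 / (4 * τ)) ((1 + y) / (2 * τ)) y := by
    refine (((hasDerivAt_id y).const_add 1).fun_pow 2).div_const (4 * τ) |>.congr_deriv ?_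
    simp only [id]
    field_simp
    ring
  refine ((hu.add_const 1).const_mul (-8 * τ ^ 2)).fun_mul hu.fun_neg.exp |>.congr_deriv ?_
  rw [neg_div]
  field_simp
  ring

lemma tendsto_cube_gaussian_primitive_atTop {τ : ℝ} (hτ : 0 < τ) :
    Tendsto
      (fun y => -8 * τ ^ 2 * ((1 + y) ^ 2 / (4 * τ) + 1) * exp (-((1 + y) ^ 2 / (4 * τ))))
      atTop (nhds 0) := by
  have hu : Tendsto (fun y : ℝ => (1 + y) ^ 2 / (4 * τ)) atTop atTop :=
    ((tendsto_pow_atTop two_ne_zero).comp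
      (tendsto_atTop_add_const_left _ 1 tendsto_id)).atTop_div_const (by positivity)
  have hg : Tendsto (fun u : ℝ => -8 * τ ^ 2 * (u + 1) * exp (-u)) atTop (nhds 0) := by
    have := ((tendsto_pow_mul_exp_neg_atTop_nhds_zero 1).add
      tendsto_exp_neg_atTop_nhds_zero).const_mul (-8 * τ ^ 2)
    simpa [add_mul, mul_assoc] using this
  exact hg.comp hu

lemma integrableOn_Ioi_cube_mul_exp_neg_sq_div {τ : ℝ} (hτ : 0 < τ) :
    IntegrableOn (fun y => (1 + y) ^ 3 * exp (-(1 + y) ^ 2 / (4 * τ))) (Ioi 0) :=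
  integrableOn_Ioi_deriv_of_nonneg'
    (fun y _ => hasDerivAt_cube_gaussian_primitive hτ.ne' y)
    (fun y hy => by have : (0:ℝ) < y := hy; positivity)
    (tendsto_cube_gaussian_primitive_atTop hτ)

lemma integral_Ioi_cube_mul_exp_neg_sq_div {τ : ℝ} (hτ : 0 < τ) :
    ∫ y in Ioi 0, (1 + y) ^ 3 * exp (-(1 + y) ^ 2 / (4 * τ))
      = (2 * τ + 8 * τ ^ 2) * exp (-(1 / (4 * τ))) := by
  rw [integral_Ioi_of_hasDerivAt_of_nonneg'
    (fun y _ => hasDerivAt_cube_gaussian_primitive hτ.ne' y)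
    (fun y hy => by have : (0:ℝ) < y := hy; positivity)
    (tendsto_cube_gaussian_primitive_atTop hτ)]
  norm_num
  field_simp
  ring

lemma integral_Ioi_cube_mul_exp_neg_sq_div_le {τ : ℝ} (hτ : 0 < τ) :
    ∫ y in Ioi 0, (1 + y) ^ 3 * exp (-(1 + y) ^ 2 / (4 * τ)) ≤ 8 * (1 + τ) * τ := by
  rw [integral_Ioi_cube_mul_exp_neg_sq_div hτ]
  have hexp : exp (-(1 / (4 * τ))) ≤ 1 :=
    exp_le_one_iff.2 (by simp only [neg_nonpos]; positivity)
  nlinarith [exp_pos (-(1 / (4 * τ)))]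

noncomputable def integrandE (t s y : ℝ) : ℝ :=
  exp (t + s) * (|1 + y| ^ 3 * exp (-(1 + y) ^ 2 / (4 * (t - s))) * exp (-y ^ 2 / (3 * s))
    / ((1 + (t - s)) * (t - s) ^ ((1:ℝ)/2) * s * (1 + s ^ 2)))

/-- At `s = t` the denominator vanishes, so the integrand is `0` by the convention `x / 0 = 0`. -/
lemma integrandE_self (t y : ℝ) : integrandE t t y = 0 := by
  simp [integrandE]

lemma integrandE_nonneg {t s : ℝ} (hs : 0 < s) (hst : s ≤ t) (y : ℝ) :
    0 ≤ integrandE t s y := by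
  have : 0 ≤ (t - s) ^ ((1:ℝ)/2) := rpow_nonneg (sub_nonneg.2 hst) _
  unfold integrandE
  positivity

lemma integrandE_le {r s t y : ℝ} (hr : 0 < r) (hrs : r ≤ s) (hst : s < t) (hy : 0 < y) :
    integrandE t s y ≤ exp (2 * t) / ((1 + (t - s)) * √(t - s) * r ^ 3)
      * ((1 + y) ^ 3 * exp (-(1 + y) ^ 2 / (4 * (t - s)))) := by
  have hτ : 0 < t - s := sub_pos.2 hst
  have hden :
      (1 + (t - s)) * √(t - s) * r ^ 3 ≤ (1 + (t - s)) * √(t - s) * s * (1 + s ^ 2) := by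
    rw [mul_assoc _ s]
    gcongr
    nlinarith [pow_le_pow_left₀ hr.le hrs 3]
  have hy2 : exp (-y ^ 2 / (3 * s)) ≤ 1 := exp_le_one_iff.2 <|
    div_nonpos_of_nonpos_of_nonneg (by nlinarith) (by linarith)
  unfold integrandE
  rw [← sqrt_eq_rpow, abs_of_pos (by linarith), mul_div_assoc', div_mul_eq_mul_div]
  have hg : 0 ≤ (1 + y) ^ 3 * exp (-(1 + y) ^ 2 / (4 * (t - s))) := by positivity
  refine div_le_div₀ (by positivity) ?_ (by positivity) hden
  rw [mul_assoc]
  refine mul_le_mul (exp_le_exp.2 (by linarith)) ?_ (by positivity) (by positivity)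
  rw [← mul_assoc]
  exact mul_le_of_le_one_right hg hy2

lemma norm_integral_integrandE_le {r s t : ℝ} (hr : 0 < r) (hrs : r ≤ s) (hst : s ≤ t) :
    ‖∫ y in Ioi 0, integrandE t s y‖ ≤ 8 * exp (2 * t) * √t / r ^ 3 := by
  have hs : 0 < s := hr.trans_le hrs
  rcases hst.eq_or_lt with rfl | hst
  · simp only [integrandE_self, integral_zero, norm_zero]
    positivity
  have hτ : 0 < t - s := sub_pos.2 hst
  rw [Real.norm_of_nonneg (setIntegral_nonneg measurableSet_Ioi
    fun y _ => integrandE_nonneg hs hst.le y)]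
  set c := exp (2 * t) / ((1 + (t - s)) * √(t - s) * r ^ 3) with hc
  calc ∫ y in Ioi 0, integrandE t s y
      ≤ ∫ y in Ioi 0, c * ((1 + y) ^ 3 * exp (-(1 + y) ^ 2 / (4 * (t - s)))) :=
        integral_mono_of_nonneg
          (ae_restrict_of_forall_mem measurableSet_Ioi fun y _ => integrandE_nonneg hs hst.le y)
          ((integrableOn_Ioi_cube_mul_exp_neg_sq_div hτ).const_mul _)
          (ae_restrict_of_forall_mem measurableSet_Ioi fun y hy => integrandE_le hr hrs hst hy)
    _ = c * ∫ y in Ioi 0, (1 + y) ^ 3 * exp (-(1 + y) ^ 2 / (4 * (t - s))) :=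
        MeasureTheory.integral_const_mul _ _
    _ ≤ c * (8 * (1 + (t - s)) * (t - s)) := by
        gcongr
        exact integral_Ioi_cube_mul_exp_neg_sq_div_le hτ
    _ = 8 * exp (2 * t) * √(t - s) / r ^ 3 := by
        have : 0 < √(t - s) := sqrt_pos.2 hτ
        rw [hc]
        field_simp
        rw [sq_sqrt hτ.le]
    _ ≤ 8 * exp (2 * t) * √t / r ^ 3 := by
        gcongr
        linarith

theorem stmt15 (κ : ℝ) (hκ : κ ∈ Ioo (0:ℝ) 1) :
    ∃ C : ℝ, 0 < C ∧ ∀ t : ℝ, 2 ≤ t →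
      (∫ s in (κ*t)..t, ∫ y' in Ioi (0:ℝ),
          exp (t + s) * (|1 + y'|^3 * exp (-(1 + y')^2 / (4*(t - s)))
            * exp (-y'^2 / (3*s))
            / ((1 + (t - s)) * (t - s) ^ ((1:ℝ)/2) * s * (1 + s^2))))
        ≤ C * exp (2*t) / t ^ ((3:ℝ)/2) := by
  obtain ⟨hκ0, hκ1⟩ := hκ
  refine ⟨8 / κ ^ 3, by positivity, fun t ht => ?_⟩
  have ht0 : 0 < t := by linarith
  have hκt : κ * t ≤ t := mul_le_of_le_one_left ht0.le hκ1.le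
  have hbound : ∀ s ∈ uIoc (κ * t) t,
      ‖∫ y in Ioi 0, integrandE t s y‖ ≤ 8 * exp (2 * t) * √t / (κ * t) ^ 3 := by
    intro s hs
    rw [uIoc_of_le hκt] at hs
    exact norm_integral_integrandE_le (by positivity) hs.1.le hs.2
  have ht32 : t ^ ((3:ℝ)/2) = t * √t := by
    rw [sqrt_eq_rpow, ← rpow_one_add' ht0.le (by norm_num)]
    norm_num
  calc (∫ s in (κ * t)..t, ∫ y in Ioi 0, integrandE t s y)
      ≤ 8 * exp (2 * t) * √t / (κ * t) ^ 3 * |t - κ * t| :=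
        (le_abs_self _).trans (norm_integral_le_of_norm_le_const hbound)
    _ ≤ 8 * exp (2 * t) * √t / (κ * t) ^ 3 * t := by
        rw [abs_of_nonneg (sub_nonneg.2 hκt)]
        gcongr
        linarith [mul_pos hκ0 ht0]
    _ = 8 / κ ^ 3 * exp (2 * t) / t ^ ((3:ℝ)/2) := by
        have : 0 < √t := sqrt_pos.2 ht0
        rw [ht32]
        field_simp
        rw [sq_sqrt ht0.le]
end
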